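/- arXiv:1809.02733 — 6 statements merged into one kernel-verified Lean document; each statement's English description precedes it below -/
import Mathlib

section
/- Let A be a finite group acting by automorphisms on a finite group G with gcd(|A|,|G|) = 1. Then [G, A, A] = [G, A], where [G,A] is the subgroup of G generated by all g⁻¹(a•g) with g ∈ G, a ∈ A. -/
/-!
Write `N = [G, A]`. A generator `g⁻¹ * α g` of `N`, with `α = φ a`, says that `α` maps the
coset `g • N` to itself; as `α ^ |A| = 1` and `|A|` is coprime to `|N|`, `α` fixes some
`x ∈ g • N`, and then `g⁻¹ * α g = m⁻¹ * α m` with `m = x⁻¹ * g ∈ N`, a generator of `[N, A]`.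

The fixed point needs no Schur–Zassenhaus. If `α ^ (p * s)` fixes `g • N` pointwise with `p`
prime, then `α ^ s` acts on `g • N` with order dividing `p`, and `p ∤ |N|` gives it a fixed
point `c`. Now `α ^ s` is the identity on `c • (N ⊓ Fix (α ^ s))`, a coset that `α` preserves,
so induction on `s` produces a fixed point of `α` there.
-/

/-- The subgroup `[G, A]` generated by all `g⁻¹ • (a • g)`. -/
def commSubAll {A G : Type*} [Group A] [Group G] (φ : A →* MulAut G) : Subgroup G :=
  Subgroup.closure {x : G | ∃ g : G, ∃ a : A, x = g⁻¹ * φ a g}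

open Function Set Pointwise

theorem Set.MapsTo.exists_isFixedPt_of_prime {X : Type*} {f : X → X} {S : Set X}
    (hf : MapsTo f S S) {p : ℕ} (hp : p.Prime) (hS : ¬p ∣ Nat.card S)
    (hfp : ∀ x ∈ S, f^[p] x = x) : ∃ x ∈ S, IsFixedPt f x := by
  classical
  have : Fact p.Prime := ⟨hp⟩
  have : Finite S := Nat.finite_of_card_ne_zero fun h => hS (h ▸ dvd_zero p)
  let _ := Fintype.ofFinite S
  let F : Function.End S := hf.restrict
  have hF : F ^ p ^ 1 = 1 := by
    rw [pow_one, hom_coe_pow (fun g : Function.End S ↦ g) rfl (fun _ _ ↦ rfl),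
      hf.iterate_restrict]
    funext x
    exact Subtype.ext (hfp x x.2)
  have hpos : 0 < Fintype.card (fixedPoints F) := by
    refine Nat.pos_of_ne_zero fun h0 => hS ?_
    rw [Nat.card_eq_fintype_card, ← Nat.modEq_zero_iff_dvd, ← h0]
    exact Equiv.Perm.card_fixedPoints_modEq hF
  obtain ⟨⟨⟨x, hx⟩, hFx⟩⟩ := Fintype.card_pos_iff.mp hpos
  exact ⟨x, hx, congrArg Subtype.val hFx⟩

namespace Monoid.End

variable {G : Type*} [Group G]

def fixedSubgroup (f : Monoid.End G) : Subgroup G where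
  carrier := fixedPoints f
  mul_mem' hx hy := (map_mul f _ _).trans (congrArg₂ _ hx hy)
  one_mem' := map_one f
  inv_mem' hx := (map_inv f _).trans (congrArg _ hx)

theorem mem_fixedSubgroup {f : Monoid.End G} {x : G} : x ∈ f.fixedSubgroup ↔ IsFixedPt f x :=
  Iff.rfl

end Monoid.End

namespace Subgroup

variable {G : Type*} [Group G] {N : Subgroup G} {f : Monoid.End G}

theorem mapsTo_leftCoset (hN : MapsTo f N N) {g : G} (hg : g⁻¹ * f g ∈ N) :
    MapsTo f (g • (N : Set G)) (g • (N : Set G)) := by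
  intro x hx
  rw [mem_leftCoset_iff] at hx ⊢
  have hfx : g⁻¹ * f x = (g⁻¹ * f g) * f (g⁻¹ * x) := by simp [mul_assoc]
  rw [hfx]
  exact N.mul_mem hg (hN hx)

theorem exists_isFixedPt_mem_leftCoset_of_coprime (r : ℕ) (hN : MapsTo f N N)
    (hr : r.Coprime (Nat.card N)) {g : G} (hg : g⁻¹ * f g ∈ N)
    (hfr : ∀ x ∈ g • (N : Set G), f^[r] x = x) :
    ∃ x ∈ g • (N : Set G), IsFixedPt f x := by
  induction r using induction_on_primes generalizing N g with
  | zero =>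
    rw [Nat.coprime_zero_left, card_eq_one] at hr
    rw [hr] at hg
    exact ⟨g, mem_own_leftCoset N.toSubmonoid g, (inv_mul_eq_one.mp (mem_bot.mp hg)).symm⟩
  | one =>
    have hgg := mem_own_leftCoset N.toSubmonoid g
    exact ⟨g, hgg, hfr g hgg⟩
  | prime_mul p s hp ih =>
    obtain ⟨c, hc, hfc⟩ := ((mapsTo_leftCoset hN hg).iterate s).exists_isFixedPt_of_prime hp
      (by
        rw [Nat.card_coe_set_eq, Set.ncard_smul_set, ← Nat.card_coe_set_eq, SetLike.coe_sort_coe,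
          ← hp.coprime_iff_not_dvd]
        exact hr.coprime_mul_right)
      (fun x hx => by rw [← iterate_mul, mul_comm]; exact hfr x hx)
    set N' := N ⊓ (f ^ s).fixedSubgroup
    have hN' : MapsTo f N' N' := fun x hx => by
      obtain ⟨hxN, hxs⟩ := mem_inf.mp hx
      refine mem_inf.mpr ⟨hN hxN, ?_⟩
      rw [Monoid.End.mem_fixedSubgroup, Monoid.End.coe_pow] at hxs ⊢
      exact ((Commute.self_iterate f s).eq x).symm.trans (congrArg f hxs)
    have hcN : c⁻¹ * f c ∈ N := by
      have := N.mul_mem (N.inv_mem ((mem_leftCoset_iff g).mp hc))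
        ((mem_leftCoset_iff g).mp (mapsTo_leftCoset hN hg hc))
      simpa [mul_assoc] using this
    have hcN' : c⁻¹ * f c ∈ N' := by
      refine mem_inf.mpr ⟨hcN, ?_⟩
      rw [Monoid.End.mem_fixedSubgroup, IsFixedPt, map_mul, map_inv, Monoid.End.coe_pow,
        ← (Commute.self_iterate f s).eq c, hfc]
    have hfs : ∀ x ∈ c • (N' : Set G), f^[s] x = x := by
      intro x hx
      have hx' := (mem_inf.mp ((mem_leftCoset_iff c).mp hx)).2
      rw [Monoid.End.mem_fixedSubgroup, Monoid.End.coe_pow] at hx'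
      rw [← mul_inv_cancel_left c x, ← Monoid.End.coe_pow, map_mul, Monoid.End.coe_pow, hfc,
        hx']
    obtain ⟨x, hx, hfx⟩ :=
      ih hN' (hr.coprime_mul_left.coprime_dvd_right (card_dvd_of_le inf_le_left)) hcN' hfs
    refine ⟨x, (mem_leftCoset_iff g).mpr ?_, hfx⟩
    rw [← mul_inv_cancel_left c x, ← mul_assoc]
    exact N.mul_mem ((mem_leftCoset_iff g).mp hc)
      (mem_inf.mp ((mem_leftCoset_iff c).mp hx)).1

end Subgroup

theorem mapsTo_commSubAll {A G : Type*} [Group A] [Group G] (φ : A →* MulAut G) (a : A) :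
    MapsTo (φ a) (commSubAll φ) (commSubAll φ) := by
  intro x hx
  induction hx using Subgroup.closure_induction with
  | mem y hy =>
    obtain ⟨g, b, rfl⟩ := hy
    refine Subgroup.subset_closure ⟨φ a g, a * b * a⁻¹, ?_⟩
    simp [MulAut.mul_apply]
  | one => simp [one_mem]
  | mul y z _ _ hy hz => simpa only [SetLike.mem_coe, map_mul] using mul_mem hy hz
  | inv y _ hy => simpa only [SetLike.mem_coe, map_inv] using inv_mem hy

theorem comm_comm_eq_comm_general {A G : Type*} [Group A] [Group G]
    (φ : A →* MulAut G) (hco : Nat.Coprime (Nat.card A) (Nat.card G)) :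
    Subgroup.closure {x : G | ∃ g ∈ commSubAll φ, ∃ a : A, x = g⁻¹ * φ a g}
      = commSubAll φ := by
  refine le_antisymm (Subgroup.closure_mono fun x ⟨g, _, a, hx⟩ => ⟨g, a, hx⟩) ?_
  refine (Subgroup.closure_le _).mpr ?_
  rintro _ ⟨g, a, rfl⟩
  have hgN : g⁻¹ * φ a g ∈ commSubAll φ := Subgroup.subset_closure ⟨g, a, rfl⟩
  set ψ := (MulDistribMulAction.toMonoidEnd (MulAut G) G).comp φ
  obtain ⟨x, hx, hfx⟩ := Subgroup.exists_isFixedPt_mem_leftCoset_of_coprime (f := ψ a)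
    (Nat.card A) (mapsTo_commSubAll φ a)
    (hco.coprime_dvd_right (Subgroup.card_subgroup_dvd_card _)) hgN
    (fun x _ => by rw [← Monoid.End.coe_pow, ← map_pow, pow_card_eq_one', map_one]; rfl)
  refine Subgroup.subset_closure ⟨(g⁻¹ * x)⁻¹, inv_mem ((mem_leftCoset_iff g).mp hx), a, ?_⟩
  have hαx : φ a x = x := hfx
  simp [hαx, mul_assoc]

theorem comm_comm_eq_comm {A G : Type*} [Group A] [Group G] [Finite A] [Finite G]
    (φ : A →* MulAut G) (hco : Nat.Coprime (Nat.card A) (Nat.card G)) :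
    Subgroup.closure {x : G | ∃ g ∈ commSubAll φ, ∃ a : A, x = g⁻¹ * φ a g}
      = commSubAll φ :=
  comm_comm_eq_comm_general φ hco
end

section
/- Let p and q be distinct primes, P a finite p-group, and A an elementary abelian group of order q² acting by automorphisms on P such that |C_P(a)| ≤ m for every nontrivial a ∈ A. Then |P| ≤ m^{q+1}. -/
/-!
For abelian `P` this is a norm computation. Every `a ≠ 1` in `A` lies in exactly one of the
`q + 1` subgroups `H` of order `q`, so the norms `N_H(z) = ∏_{h ∈ H} h • z ∈ C_P(H)` satisfy
`∏_H N_H(z) = z ^ q * N_A(z)`; since `q` is prime to `p`, every element is a `q`-th power and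
hence a product of elements of the `C_P(H)`. In general one inducts on `|P|` through
`P / Z(P)`: fixed points of `H` on `P / Z(P)` lift to `P`, because `H` is a `q`-group permuting
the elements of a coset of `Z(P)`, whose number is prime to `q`; the central correction is then
decomposed by the abelian case. So `P = C_P(H₀) ⋯ C_P(H_q)` and `|P| ≤ m ^ (q + 1)`.
-/

/-- The subgroup of fixed points of a single automorphism `φ a`. -/
def fixedSub {A G : Type*} [Group A] [Group G] (φ : A →* MulAut G) (a : A) : Subgroup G where
  carrier := {g : G | φ a g = g}
  one_mem' := map_one _
  mul_mem' := by
    intro x y hx hy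
    simp only [Set.mem_setOf_eq, map_mul] at *
    rw [hx, hy]
  inv_mem' := by
    intro x hx
    simp only [Set.mem_setOf_eq, map_inv] at *
    rw [hx]

open Subgroup Finset

section FixedPoints

variable {A G : Type*} [Group A] [Group G] (φ : A →* MulAut G)

theorem mem_fixedSub {a : A} {g : G} : g ∈ fixedSub φ a ↔ φ a g = g := Iff.rfl

def fixedSubOf (H : Subgroup A) : Subgroup G := ⨅ a : H, fixedSub φ a

theorem mem_fixedSubOf {H : Subgroup A} {g : G} : g ∈ fixedSubOf φ H ↔ ∀ a ∈ H, φ a g = g := by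
  simp [fixedSubOf, mem_iInf, mem_fixedSub]

theorem fixedSubOf_le_fixedSub {H : Subgroup A} {a : A} (ha : a ∈ H) :
    fixedSubOf φ H ≤ fixedSub φ a :=
  iInf_le (fun b : H => fixedSub φ b) ⟨a, ha⟩

theorem fixedSubOf_antitone : Antitone (fixedSubOf φ) :=
  fun _ _ hHK _ hg => (mem_fixedSubOf φ).2 fun a ha => (mem_fixedSubOf φ).1 hg a (hHK ha)

end FixedPoints

def MulAut.quotient {G : Type*} [Group G] (N : Subgroup G) [N.Characteristic] :
    MulAut G →* MulAut (G ⧸ N) where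
  toFun e := QuotientGroup.congr N N e (characteristic_iff_map_eq.mp ‹_› e)
  map_one' := by ext x; induction x using QuotientGroup.induction_on; rfl
  map_mul' _ _ := by ext x; induction x using QuotientGroup.induction_on; rfl

theorem MulAut.quotient_apply_mk {G : Type*} [Group G] (N : Subgroup G) [N.Characteristic]
    (e : MulAut G) (g : G) : MulAut.quotient N e g = (e g : G ⧸ N) := rfl

theorem coe_mem_fixedSubOf_of_mem {A G : Type*} [Group A] [Group G] {φ : A →* MulAut G}
    {N : Subgroup G} [N.Characteristic] {H : Subgroup A} {c : N}
    (hc : c ∈ fixedSubOf ((MulAut.characteristic N).comp φ) H) : (c : G) ∈ fixedSubOf φ H :=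
  (mem_fixedSubOf φ).2 fun a ha => congrArg Subtype.val ((mem_fixedSubOf _).1 hc a ha)

section Lifting

variable {A G : Type*} [Group A] [Group G] (φ : A →* MulAut G)

theorem exists_mem_fixedSubOf_mk_eq {q : ℕ} [Fact q.Prime] {H : Subgroup A} (hH : IsPGroup q H)
    {N : Subgroup G} [N.Characteristic] (hN : ¬ q ∣ Nat.card N) {y : G ⧸ N}
    (hy : y ∈ fixedSubOf ((MulAut.quotient N).comp φ) H) :
    ∃ g ∈ fixedSubOf φ H, (g : G ⧸ N) = y := by
  let _ : MulAction H G := MulAction.compHom G (φ.comp H.subtype)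
  let fiber : SubMulAction H G :=
    { carrier := QuotientGroup.mk ⁻¹' {y}
      smul_mem' := fun h g (hg : (g : G ⧸ N) = y) => by
        change ((φ h g : G) : G ⧸ N) = y
        rw [← MulAut.quotient_apply_mk, ← MonoidHom.comp_apply, hg]
        exact (mem_fixedSubOf _).1 hy h h.2 }
  have hcard : Nat.card fiber = Nat.card N :=
    (QuotientGroup.card_preimage_mk N {y}).trans (by simp)
  obtain ⟨⟨g, hgy⟩, hg⟩ := hH.nonempty_fixed_point_of_prime_not_dvd_card fiber (hcard ▸ hN)
  exact ⟨g, (mem_fixedSubOf φ).2 fun a ha => congrArg Subtype.val (hg ⟨a, ha⟩), hgy⟩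

end Lifting

section Partition

variable {A : Type*} [Group A]

def IsSubgroupPartition (S : Finset (Subgroup A)) : Prop :=
  ∀ a : A, a ≠ 1 → ∃! H ∈ S, a ∈ H

open scoped Classical

variable [Fintype A] {S : Finset (Subgroup A)}

theorem IsSubgroupPartition.biUnion_eq (hS : IsSubgroupPartition S) :
    S.biUnion (fun H => (H : Set A).toFinset.erase 1) = univ.erase 1 := by
  ext a
  simp only [mem_biUnion, mem_erase, Set.mem_toFinset, SetLike.mem_coe, mem_univ, and_true]
  refine ⟨fun ⟨_, _, ha, _⟩ => ha, fun ha => ?_⟩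
  obtain ⟨H, ⟨hHS, haH⟩, -⟩ := hS a ha
  exact ⟨H, hHS, ha, haH⟩

theorem IsSubgroupPartition.pairwiseDisjoint (hS : IsSubgroupPartition S) :
    (S : Set (Subgroup A)).PairwiseDisjoint (fun H => (H : Set A).toFinset.erase 1) := by
  intro H hH K hK hHK
  refine Finset.disjoint_left.2 fun a haH haK => hHK ?_
  simp only [mem_erase, Set.mem_toFinset, SetLike.mem_coe] at haH haK
  exact (hS a haH.1).unique ⟨hH, haH.2⟩ ⟨hK, haK.2⟩

theorem IsSubgroupPartition.sum_card_sub_one (hS : IsSubgroupPartition S) :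
    ∑ H ∈ S, (Nat.card H - 1) = Nat.card A - 1 := by
  rw [Nat.card_eq_fintype_card, ← card_univ, ← card_erase_of_mem (mem_univ 1), ← hS.biUnion_eq,
    card_biUnion hS.pairwiseDisjoint]
  refine sum_congr rfl fun H _ => ?_
  rw [card_erase_of_mem (by simp), Set.toFinset_card, Nat.card_eq_fintype_card]
  rfl

end Partition

section Norm

variable {A Q : Type*} [Group A] [Fintype A] [CommGroup Q] (φ : A →* MulAut Q)

open scoped Classical

noncomputable def subgroupNorm (H : Subgroup A) (z : Q) : Q :=
  ∏ a ∈ (H : Set A).toFinset, φ a z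

theorem subgroupNorm_mem_fixedSubOf (H : Subgroup A) (z : Q) :
    subgroupNorm φ H z ∈ fixedSubOf φ H := by
  refine (mem_fixedSubOf φ).2 fun b hb => ?_
  simp only [subgroupNorm, map_prod, ← MulAut.mul_apply, ← map_mul]
  refine prod_nbij' (b * ·) (b⁻¹ * ·) ?_ ?_ ?_ ?_ fun _ _ => rfl <;>
    simp [mul_mem_cancel_left hb, mul_mem_cancel_left (inv_mem hb)]

theorem mul_prod_subgroupNorm {S : Finset (Subgroup A)} (hS : IsSubgroupPartition S) (z : Q) :
    z * ∏ H ∈ S, subgroupNorm φ H z = z ^ S.card * subgroupNorm φ ⊤ z := by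
  have split (H : Subgroup A) :
      subgroupNorm φ H z = z * ∏ a ∈ (H : Set A).toFinset.erase 1, φ a z := by
    rw [subgroupNorm, ← mul_prod_erase _ _ (by simp : (1 : A) ∈ (H : Set A).toFinset),
      map_one, MulAut.one_apply]
  have htop : ((⊤ : Subgroup A) : Set A).toFinset = univ := by ext; simp
  simp only [split, prod_mul_distrib, prod_const]
  rw [← prod_biUnion hS.pairwiseDisjoint, hS.biUnion_eq, htop]
  exact mul_left_comm _ _ _

theorem exists_prod_eq_of_isSubgroupPartition {n : ℕ} {S : Finset (Subgroup A)}
    (hS : IsSubgroupPartition S) (hcard : S.card = n + 1) (hn : (Nat.card Q).Coprime n) (z : Q) :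
    ∃ w : Subgroup A → Q, (∀ H ∈ S, w H ∈ fixedSubOf φ H) ∧ ∏ H ∈ S, w H = z := by
  obtain ⟨y, rfl⟩ : ∃ y, y ^ n = z := (powCoprime hn).surjective z
  obtain ⟨H₀, hH₀⟩ : S.Nonempty := card_pos.1 (by omega)
  have hnorm : ∏ H ∈ S, subgroupNorm φ H y = y ^ n * subgroupNorm φ ⊤ y := by
    have := mul_prod_subgroupNorm φ hS y
    rwa [hcard, pow_succ', mul_assoc, mul_left_cancel_iff] at this
  have hfix_top : (subgroupNorm φ ⊤ y)⁻¹ ∈ fixedSubOf φ H₀ :=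
    fixedSubOf_antitone φ le_top (inv_mem (subgroupNorm_mem_fixedSubOf φ ⊤ y))
  -- `N_A(y)⁻¹` is fixed by all of `A`, so it can be absorbed into the factor of `H₀`.
  refine ⟨fun H => subgroupNorm φ H y * (Pi.mulSingle H₀ (subgroupNorm φ ⊤ y)⁻¹ : _ → Q) H,
    fun H _ => mul_mem (subgroupNorm_mem_fixedSubOf φ H y) ?_, ?_⟩
  · by_cases hH : H = H₀
    · subst hH; simpa using hfix_top
    · simp [hH, one_mem]
  · rw [prod_mul_distrib, hnorm, prod_pi_mulSingle', if_pos hH₀, mul_inv_cancel_right]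

end Norm

theorem List.prod_map_mul_of_mem_center {ι G : Type*} [Group G] (l : List ι) {f : ι → G}
    (g : ι → G) (hf : ∀ i ∈ l, f i ∈ center G) :
    (l.map fun i => f i * g i).prod = (l.map f).prod * (l.map g).prod := by
  induction l with
  | nil => simp
  | cons i l ih =>
    have hcentral : (l.map f).prod ∈ center G :=
      list_prod_mem fun _ hx => by
        obtain ⟨j, hj, rfl⟩ := List.mem_map.1 hx
        exact hf j (List.mem_cons_of_mem i hj)
    simp only [List.map_cons, List.prod_cons, ih fun j hj => hf j (List.mem_cons_of_mem i hj)]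
    rw [mul_assoc, ← mul_assoc (g i), mem_center_iff.1 hcentral (g i)]
    simp only [mul_assoc]

theorem card_le_list_prod_card_of_forall_exists {ι M : Type*} [Monoid M] [Finite M] (l : List ι)
    (K : ι → Set M) (h : ∀ x : M, ∃ w : ι → M, (∀ i ∈ l, w i ∈ K i) ∧ (l.map w).prod = x) :
    Nat.card M ≤ (l.map fun i => Nat.card (K i)).prod := by
  let F : ((j : Fin l.length) → K l[j]) → M := fun v => (List.ofFn fun j => (v j : M)).prod
  have hF : Function.Surjective F := fun x => by
    obtain ⟨w, hw, rfl⟩ := h x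
    exact ⟨fun j => ⟨w l[j], hw _ (l.getElem_mem j.2)⟩, by simp [F, List.ofFn_getElem_eq_map]⟩
  calc Nat.card M ≤ Nat.card ((j : Fin l.length) → K l[j]) := Nat.card_le_card_of_surjective F hF
    _ = (l.map fun i => Nat.card (K i)).prod := by
      rw [Nat.card_pi, ← List.prod_ofFn, ← List.ofFn_getElem_eq_map]
      rfl

section Decomposition

open scoped Classical IsMulCommutative

variable {p q : ℕ} [Fact p.Prime] [Fact q.Prime] {A : Type*} [Group A] [Finite A]
  {L : List (Subgroup A)}

theorem exists_list_prod_eq_of_quotient_center (hpq : p ≠ q) (hL : L.Nodup)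
    (hpart : IsSubgroupPartition L.toFinset) (hlen : L.length = q + 1)
    (hq : ∀ H ∈ L, IsPGroup q H) {P : Type*} [Group P] [Finite P] (hP : IsPGroup p P)
    (φ : A →* MulAut P) (x : P)
    (hbar : ∃ w : Subgroup A → P ⧸ center P,
      (∀ H ∈ L, w H ∈ fixedSubOf ((MulAut.quotient (center P)).comp φ) H) ∧ (L.map w).prod = x) :
    ∃ w : Subgroup A → P, (∀ H ∈ L, w H ∈ fixedSubOf φ H) ∧ (L.map w).prod = x := by
  have := Fintype.ofFinite A
  obtain ⟨wbar, hwbar, hprod⟩ := hbar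
  have hcop : (Nat.card (center P)).Coprime q := by
    obtain ⟨k, hk⟩ := (hP.to_subgroup (center P)).exists_card_eq
    exact hk ▸ Nat.Coprime.pow_left k ((Nat.coprime_primes Fact.out Fact.out).2 hpq)
  have hlift (H : Subgroup A) :
      ∃ g : P, H ∈ L → g ∈ fixedSubOf φ H ∧ (g : P ⧸ center P) = wbar H := by
    by_cases hH : H ∈ L
    · obtain ⟨g, hg⟩ := exists_mem_fixedSubOf_mk_eq φ (hq H hH)
        ((Nat.Prime.coprime_iff_not_dvd Fact.out).1 hcop.symm) (hwbar H hH)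
      exact ⟨g, fun _ => hg⟩
    · exact ⟨1, fun h => absurd h hH⟩
  choose g hg using hlift
  have hy : (L.map g).prod⁻¹ * x ∈ center P := by
    rw [← QuotientGroup.eq, ← hprod, ← QuotientGroup.mk'_apply, map_list_prod, List.map_map]
    exact congrArg List.prod (List.map_congr_left fun H hH => (hg H hH).2)
  obtain ⟨c, hc, hcprod⟩ := exists_prod_eq_of_isSubgroupPartition
    ((MulAut.characteristic (center P)).comp φ) hpart
    (by rw [List.toFinset_card_of_nodup hL, hlen]) hcop ⟨_, hy⟩
  refine ⟨fun H => c H * g H, fun H hH => mul_mem ?_ (hg H hH).1, ?_⟩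
  · exact coe_mem_fixedSubOf_of_mem (hc H (List.mem_toFinset.2 hH))
  · have hcprod' : (L.map fun H => (c H : P)).prod = (L.map g).prod⁻¹ * x := by
      rw [List.prod_toFinset _ hL] at hcprod
      simpa [Function.comp_def] using congrArg Subtype.val hcprod
    rw [List.prod_map_mul_of_mem_center L g fun H _ => (c H).2, hcprod', ← mem_center_iff.1 hy,
      mul_inv_cancel_left]

theorem exists_list_prod_eq (hpq : p ≠ q) (hL : L.Nodup)
    (hpart : IsSubgroupPartition L.toFinset) (hlen : L.length = q + 1)
    (hq : ∀ H ∈ L, IsPGroup q H) {P : Type*} [Group P] [Finite P] (hP : IsPGroup p P)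
    (φ : A →* MulAut P) (x : P) :
    ∃ w : Subgroup A → P, (∀ H ∈ L, w H ∈ fixedSubOf φ H) ∧ (L.map w).prod = x := by
  induction hk : Nat.card P using Nat.strong_induction_on generalizing P with
  | _ k ih =>
  rcases subsingleton_or_nontrivial P with hP1 | hP1
  · exact ⟨1, fun H _ => one_mem _, Subsingleton.elim _ _⟩
  have hlt : Nat.card (P ⧸ center P) < k := by
    have := hP.center_nontrivial
    rw [← hk, ← (center P).card_mul_index, index_eq_card, lt_mul_iff_one_lt_left Nat.card_pos]
    exact Finite.one_lt_card
  exact exists_list_prod_eq_of_quotient_center hpq hL hpart hlen hq hP φ x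
    (ih _ hlt (hP.to_quotient _) _ _ rfl)

end Decomposition

section PrimeExponent

variable {q : ℕ} [hq : Fact q.Prime] {A : Type*} [Group A] [Finite A] {S : Finset (Subgroup A)}

theorem isSubgroupPartition_of_pow_eq_one (hexp : ∀ a : A, a ^ q = 1)
    (hS : ∀ H, H ∈ S ↔ Nat.card H = q) : IsSubgroupPartition S := by
  intro a ha
  have hcard : Nat.card (zpowers a) = q := by rw [Nat.card_zpowers, orderOf_eq_prime (hexp a) ha]
  refine ⟨zpowers a, ⟨(hS _).2 hcard, mem_zpowers a⟩, fun H ⟨hHS, haH⟩ => ?_⟩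
  exact (eq_of_le_of_card_ge (zpowers_le.2 haH) (by rw [hcard, (hS H).1 hHS])).symm

theorem card_eq_add_one_of_card_eq_sq (hexp : ∀ a : A, a ^ q = 1)
    (hS : ∀ H, H ∈ S ↔ Nat.card H = q) (hcard : Nat.card A = q ^ 2) : S.card = q + 1 := by
  have := Fintype.ofFinite A
  have h := (isSubgroupPartition_of_pow_eq_one hexp hS).sum_card_sub_one
  rw [sum_congr rfl fun H hH => by rw [(hS H).1 hH], sum_const, smul_eq_mul, hcard,
    ← one_pow 2, Nat.sq_sub_sq] at h
  exact Nat.eq_of_mul_eq_mul_right (Nat.sub_pos_of_lt hq.out.one_lt) h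

end PrimeExponent

theorem card_le_of_small_centralizers_general {p q m : ℕ} (hp : p.Prime) (hq : q.Prime)
    (hpq : p ≠ q) {P A : Type*} [Group P] [Finite P] [CommGroup A] [Finite A]
    (hP : IsPGroup p P) (hcard : Nat.card A = q ^ 2) (hexp : ∀ a : A, a ^ q = 1)
    (φ : A →* MulAut P) (hfix : ∀ a : A, a ≠ 1 → Nat.card (fixedSub φ a) ≤ m) :
    Nat.card P ≤ m ^ (q + 1) := by
  have := Fact.mk hp
  have := Fact.mk hq
  obtain ⟨S, hS⟩ : ∃ S : Finset (Subgroup A), ∀ H, H ∈ S ↔ Nat.card H = q :=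
    ⟨(Set.toFinite {H : Subgroup A | Nat.card H = q}).toFinset, by simp⟩
  have hpart := isSubgroupPartition_of_pow_eq_one hexp hS
  have hdecomp (x : P) := exists_list_prod_eq hpq (S.nodup_toList) (by simpa using hpart)
    (by rw [length_toList, card_eq_add_one_of_card_eq_sq hexp hS hcard])
    (fun H hH => IsPGroup.of_card (n := 1) (by simpa using (hS H).1 (mem_toList.1 hH))) hP φ x
  have hbound (H : Subgroup A) (hH : H ∈ S) : Nat.card (fixedSubOf φ H) ≤ m := by
    have : Nontrivial H := Finite.one_lt_card_iff_nontrivial.1 ((hS H).1 hH ▸ hq.one_lt)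
    obtain ⟨⟨a, haH⟩, ha⟩ := exists_ne (1 : H)
    exact (card_le_of_le (fixedSubOf_le_fixedSub φ haH)).trans (hfix a (by simpa using ha))
  calc Nat.card P ≤ (S.toList.map fun H => Nat.card (fixedSubOf φ H)).prod :=
        card_le_list_prod_card_of_forall_exists _ (fun H => (fixedSubOf φ H : Set P)) hdecomp
    _ ≤ m ^ S.card := by
      simpa using List.prod_le_pow_card (S.toList.map fun H => Nat.card (fixedSubOf φ H)) m
        (by simpa using hbound)
    _ = m ^ (q + 1) := by rw [card_eq_add_one_of_card_eq_sq hexp hS hcard]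

theorem card_le_of_small_centralizers {p q m : ℕ} (hp : p.Prime) (hq : q.Prime)
    (hpq : p ≠ q) (hm : 0 < m) {P A : Type*} [Group P] [Finite P] [CommGroup A] [Finite A]
    (hP : IsPGroup p P) (hcard : Nat.card A = q ^ 2) (hexp : ∀ a : A, a ^ q = 1)
    (φ : A →* MulAut P) (hfix : ∀ a : A, a ≠ 1 → Nat.card (fixedSub φ a) ≤ m) :
    Nat.card P ≤ m ^ (q + 1) :=
  card_le_of_small_centralizers_general hp hq hpq hP hcard hexp φ hfix
end

section
/- There is a function f : ℕ → ℕ such that the following holds: for every positive integer m, every prime q, every elementary abelian group A of order q² acting by automorphisms on a finite group G with gcd(|A|,|G|) = 1, if |C_G(a)| ≤ m for every nontrivial a ∈ A, then |G| ≤ f(m). In particular the bound is independent of q. -/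
/-
For each prime `p`, the group `A` normalizes a Sylow `p`-subgroup `P` of `G`, since it permutes
the Sylow `p`-subgroups and their number is prime to `q`. In a coprime action, fixed points of `A`
and of its subgroups lift through invariant quotients, so induction on the centre of `P` reduces
two facts to abelian groups: `|P| ≤ ∏_{a ≠ 1} |C_P(a)|` and `P = ⟨C_P(a) | a ≠ 1⟩`. For an abelian
`W` both hold because `A` acts fixed-point-freely on `W / ⟨C_W(a) | a ≠ 1⟩`, and such an action is
trivial: the norms `∏_{b ∈ B} b • w` over the `q + 1` subgroups `B` of order `q` vanish, and
multiplying them gives `w ^ q = 1`.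

If `q ≤ m`, the first fact gives `|P| ≤ m ^ (q ^ 2 - 1) ≤ m ^ m ^ 2`. If `q > m`, then `|C_P(a)|`
and `|C_P(A)|` are both congruent to `|P|` modulo `q` and smaller than `q`, so `C_P(a) = C_P(A)`
for every `a ≠ 1`; the second fact then gives `P = C_P(A)`, hence `|P| ≤ m`. Finally `|G|` is a
product of at most `m ^ m ^ 2` such prime powers.
-/

namespace CoprimeAction

open Subgroup

section Basic

variable {A G : Type*} [Group A] [Group G]

@[simp] lemma mem_fixedSub {φ : A →* MulAut G} {a : A} {g : G} :
    g ∈ fixedSub φ a ↔ φ a g = g := Iff.rfl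

def fixedBy (φ : A →* MulAut G) (S : Subgroup A) : Subgroup G := ⨅ a ∈ S, fixedSub φ a

lemma mem_fixedBy {φ : A →* MulAut G} {S : Subgroup A} {g : G} :
    g ∈ fixedBy φ S ↔ ∀ a ∈ S, φ a g = g := by
  simp [fixedBy, mem_iInf]

lemma fixedBy_le_fixedSub (φ : A →* MulAut G) {S : Subgroup A} {a : A} (ha : a ∈ S) :
    fixedBy φ S ≤ fixedSub φ a :=
  iInf₂_le a ha

lemma fixedBy_zpowers (φ : A →* MulAut G) (a : A) :
    fixedBy φ (zpowers a) = fixedSub φ a := by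
  refine le_antisymm (fixedBy_le_fixedSub φ (mem_zpowers a)) fun g hg => ?_
  have : zpowers a ≤ (MulAction.stabilizer (MulAut G) g).comap φ := zpowers_le.mpr hg
  exact mem_fixedBy.mpr fun b hb => this hb

def IsInvariant (φ : A →* MulAut G) (K : Subgroup G) : Prop :=
  ∀ x : A, K ≤ K.comap (φ x).toMonoidHom

lemma isInvariant_of_characteristic (φ : A →* MulAut G) (K : Subgroup G) [K.Characteristic] :
    IsInvariant φ K :=
  fun x => (characteristic_iff_le_comap.mp ‹_›) (φ x)

lemma IsInvariant.map_eq {φ : A →* MulAut G} {K : Subgroup G} (hK : IsInvariant φ K) (x : A) :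
    K.map (φ x).toMonoidHom = K := by
  refine le_antisymm (map_le_iff_le_comap.mpr (hK x)) fun k hk => ⟨φ x⁻¹ k, hK x⁻¹ hk, ?_⟩
  simp

def restrictAut (φ : A →* MulAut G) (K : Subgroup G) (hK : IsInvariant φ K) : A →* MulAut K where
  toFun x :=
    { toFun := fun k => ⟨φ x k, hK x k.2⟩
      invFun := fun k => ⟨φ x⁻¹ k, hK x⁻¹ k.2⟩
      left_inv := fun k => Subtype.ext <| by simp
      right_inv := fun k => Subtype.ext <| by simp
      map_mul' := fun k l => Subtype.ext <| by simp }
  map_one' := by ext; simp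
  map_mul' x y := by ext; simp

@[simp] lemma restrictAut_apply (φ : A →* MulAut G) (K : Subgroup G) (hK : IsInvariant φ K)
    (x : A) (k : K) : (restrictAut φ K hK x k : G) = φ x k := rfl

def quotAut (φ : A →* MulAut G) (N : Subgroup G) [N.Normal] (hN : IsInvariant φ N) :
    A →* MulAut (G ⧸ N) where
  toFun x := QuotientGroup.congr N N (φ x) (hN.map_eq x)
  map_one' := by
    ext g
    induction g using QuotientGroup.induction_on
    simp [QuotientGroup.congr]
  map_mul' x y := by
    ext g
    induction g using QuotientGroup.induction_on
    simp [QuotientGroup.congr]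

lemma fixedSub_restrictAut (φ : A →* MulAut G) (K : Subgroup G) (hK : IsInvariant φ K) (a : A) :
    fixedSub (restrictAut φ K hK) a = (fixedSub φ a).subgroupOf K := by
  ext k
  simp [mem_subgroupOf, Subtype.ext_iff]

lemma map_subtype_fixedSub_restrictAut (φ : A →* MulAut G) (K : Subgroup G)
    (hK : IsInvariant φ K) (a : A) :
    (fixedSub (restrictAut φ K hK) a).map K.subtype = fixedSub φ a ⊓ K := by
  rw [fixedSub_restrictAut, subgroupOf_map_subtype]

lemma card_subgroupOf (H K : Subgroup G) : Nat.card (H.subgroupOf K) = Nat.card ↥(H ⊓ K) := by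
  rw [← subgroupOf_map_subtype, card_map_of_injective K.subtype_injective]

lemma IsInvariant.iSup₂ {ι : Sort*} {κ : ι → Sort*} {φ : A →* MulAut G}
    {K : ∀ i, κ i → Subgroup G} (hK : ∀ i j, IsInvariant φ (K i j)) :
    IsInvariant φ (⨆ (i) (j), K i j) :=
  fun x => iSup₂_le fun i j => (hK i j x).trans (comap_mono (le_iSup₂ (f := K) i j))

lemma isInvariant_fixedSub {A : Type*} [CommGroup A] (φ : A →* MulAut G) (a : A) :
    IsInvariant φ (fixedSub φ a) := fun x g (hg : φ a g = g) => by
  change φ a (φ x g) = φ x g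
  rw [← MulAut.mul_apply, ← map_mul, mul_comm, map_mul, MulAut.mul_apply, hg]

lemma card_fixedSub_restrictAut_le [Finite G] (φ : A →* MulAut G) (K : Subgroup G)
    (hK : IsInvariant φ K) (a : A) :
    Nat.card (fixedSub (restrictAut φ K hK) a) ≤ Nat.card (fixedSub φ a) := by
  rw [fixedSub_restrictAut, card_subgroupOf]
  exact card_le_of_le inf_le_left

end Basic

section Coprime

variable {A G : Type*} [Group A] [Group G] {q : ℕ} [Fact q.Prime]

lemma card_modEq_card_fixedBy [Finite G] (φ : A →* MulAut G) {S : Subgroup A}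
    (hS : IsPGroup q S) : Nat.card G ≡ Nat.card (fixedBy φ S) [MOD q] := by
  let : MulAction S G := MulAction.compHom G (φ.comp S.subtype)
  have e : MulAction.fixedPoints S G ≃ fixedBy φ S := Equiv.subtypeEquivRight fun g => by
    simp only [MulAction.mem_fixedPoints, Subtype.forall, mem_fixedBy]
    rfl
  exact Nat.card_congr e ▸ hS.card_modEq_card_fixedPoints G

lemma fixedBy_quotAut [Finite G] (φ : A →* MulAut G) (N : Subgroup G) [N.Normal]
    (hN : IsInvariant φ N) (hqN : ¬ q ∣ Nat.card N) {S : Subgroup A} (hS : IsPGroup q S) :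
    fixedBy (quotAut φ N hN) S = (fixedBy φ S).map (QuotientGroup.mk' N) := by
  refine le_antisymm (fun x hx => ?_) (map_le_iff_le_comap.mpr fun g hg => ?_)
  · obtain ⟨g, rfl⟩ := QuotientGroup.mk'_surjective N x
    let : MulAction S G := MulAction.compHom G (φ.comp S.subtype)
    -- `S` permutes the coset `gN`, whose size is prime to `q`, so it fixes a point of it
    let coset : SubMulAction S G :=
      { carrier := QuotientGroup.mk' N ⁻¹' {QuotientGroup.mk' N g}
        smul_mem' := fun s h (hh : (h : G ⧸ N) = g) =>
          (congrArg (quotAut φ N hN s) hh).trans (mem_fixedBy.mp hx s s.2) }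
    have hcard : Nat.card coset = Nat.card N := by
      rw [← QuotientGroup.ker_mk' N]
      exact Nat.card_congr ((QuotientGroup.mk' N).fiberEquivKer g)
    obtain ⟨⟨h, hh⟩, hfix⟩ := hS.nonempty_fixed_point_of_prime_not_dvd_card coset (hcard ▸ hqN)
    exact ⟨h, mem_fixedBy.mpr fun s hs => congrArg Subtype.val (hfix ⟨s, hs⟩), hh⟩
  · exact mem_fixedBy.mpr fun s hs => congrArg _ (mem_fixedBy.mp hg s hs)

lemma fixedSub_quotAut [Finite G] (φ : A →* MulAut G) (N : Subgroup G) [N.Normal]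
    (hN : IsInvariant φ N) (hqN : ¬ q ∣ Nat.card N) {a : A} (ha : IsPGroup q (zpowers a)) :
    fixedSub (quotAut φ N hN) a = (fixedSub φ a).map (QuotientGroup.mk' N) := by
  rw [← fixedBy_zpowers, ← fixedBy_zpowers, fixedBy_quotAut φ N hN hqN ha]

lemma card_fixedSub_eq_mul [Finite G] (φ : A →* MulAut G) (N : Subgroup G) [N.Normal]
    (hN : IsInvariant φ N) (hqN : ¬ q ∣ Nat.card N) {a : A} (ha : IsPGroup q (zpowers a)) :
    Nat.card (fixedSub φ a) =
      Nat.card (fixedSub (quotAut φ N hN) a) * Nat.card (fixedSub (restrictAut φ N hN) a) := by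
  let f := (QuotientGroup.mk' N).comp (fixedSub φ a).subtype
  have hrange : f.range = fixedSub (quotAut φ N hN) a := by
    rw [MonoidHom.range_comp, range_subtype, fixedSub_quotAut φ N hN hqN ha]
  have hker : f.ker = N.subgroupOf (fixedSub φ a) := by
    rw [← MonoidHom.comap_ker, QuotientGroup.ker_mk']
    rfl
  rw [← card_mul_index f.ker, index_ker, hrange, hker, fixedSub_restrictAut, card_subgroupOf,
    card_subgroupOf, inf_comm, mul_comm]

end Coprime

section Commutative

open Finset

variable {A W : Type*} [Group A] [Fintype A] [CommGroup W]

lemma prod_mem_fixedBy (φ : A →* MulAut W) (B : Subgroup A) [DecidablePred (· ∈ B)] (w : W) :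
    ∏ a ∈ univ.filter (· ∈ B), φ a w ∈ fixedBy φ B := by
  refine mem_fixedBy.mpr fun c hc => ?_
  rw [map_prod]
  exact prod_nbij' (c * ·) (c⁻¹ * ·) (by simp [mul_mem_cancel_left hc])
    (by simp [mul_mem_cancel_left (inv_mem hc)]) (by simp) (by simp) (by simp)

lemma card_biSup_le_prod {ι : Type*} [DecidableEq ι] (s : Finset ι) (H : ι → Subgroup W) :
    Nat.card ↥(⨆ i ∈ s, H i) ≤ ∏ i ∈ s, Nat.card (H i) := by
  induction s using Finset.induction_on with
  | empty => simp
  | insert i s hi ih =>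
    rw [Finset.iSup_insert, prod_insert hi]
    calc Nat.card ↥(H i ⊔ ⨆ j ∈ s, H j)
        ≤ Nat.card (H i) * Nat.card ↥(⨆ j ∈ s, H j) := by
          rw [← SetLike.coe_sort_coe, mul_normal]
          exact Set.natCard_mul_le
      _ ≤ _ := Nat.mul_le_mul_left _ ih

end Commutative

section ElementaryAbelian

open Finset

variable {q : ℕ} [Fact q.Prime] {A : Type*} [CommGroup A] [Fintype A]

lemma card_filter_mem {G : Type*} [Group G] [Fintype G] (H : Subgroup G) [DecidablePred (· ∈ H)] :
    #(univ.filter (· ∈ H)) = Nat.card H := by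
  rw [Nat.card_eq_fintype_card, Fintype.card_subtype]

lemma zpowers_eq_of_mem (hexp : ∀ a : A, a ^ q = 1) {a b : A} (ha : a ≠ 1) (hab : a ∈ zpowers b) :
    zpowers a = zpowers b := by
  refine eq_of_le_of_card_ge (zpowers_le.mpr hab) ?_
  rw [Nat.card_zpowers, Nat.card_zpowers, orderOf_eq_prime (hexp a) ha]
  exact orderOf_le_of_pow_eq_one (Fact.out : q.Prime).pos (hexp b)

lemma exists_ne_one_of_card_eq_sq (hA : Nat.card A = q ^ 2) : ∃ a : A, a ≠ 1 :=
  have : Nontrivial A := Finite.one_lt_card_iff_nontrivial.mp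
    (hA ▸ Nat.one_lt_pow two_ne_zero (Fact.out : q.Prime).one_lt)
  exists_ne 1

variable [DecidableEq A]

open Classical in
lemma filter_zpowers_eq (hexp : ∀ a : A, a ^ q = 1) (b : A) :
    (univ.erase 1).filter (zpowers · = zpowers b) = (univ.filter (· ∈ zpowers b)).erase 1 := by
  ext a
  simp only [mem_filter, mem_erase, mem_univ, and_true, true_and]
  refine and_congr_right fun ha => ⟨fun h => h ▸ mem_zpowers a, zpowers_eq_of_mem hexp ha⟩

open Classical in
lemma card_filter_zpowers_eq (hexp : ∀ a : A, a ^ q = 1) {b : A} (hb : b ≠ 1) :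
    #((univ.erase 1).filter (zpowers · = zpowers b)) = q - 1 := by
  rw [filter_zpowers_eq hexp b, card_erase_of_mem (by simp), card_filter_mem,
    Nat.card_zpowers, orderOf_eq_prime (hexp b) hb]

open Classical in
lemma card_image_zpowers (hA : Nat.card A = q ^ 2) (hexp : ∀ a : A, a ^ q = 1) :
    #((univ.erase (1 : A)).image zpowers) = q + 1 := by
  have hcard : #(univ.erase (1 : A)) = (q + 1) * (q - 1) := by
    rw [card_erase_of_mem (mem_univ _), card_univ, ← Nat.card_eq_fintype_card, hA, ← Nat.sq_sub_sq,
      one_pow]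
  rw [card_eq_sum_card_fiberwise (fun a ha => mem_image_of_mem zpowers ha),
    sum_congr rfl (g := fun _ => q - 1), sum_const, smul_eq_mul] at hcard
  · exact Nat.eq_of_mul_eq_mul_right (Nat.sub_pos_of_lt (Fact.out : q.Prime).one_lt) hcard
  · simp only [mem_image]
    rintro _ ⟨b, hb, rfl⟩
    exact card_filter_zpowers_eq hexp (mem_erase.mp hb).1

lemma eq_one_of_forall_fixedSub_eq_bot {W : Type*} [CommGroup W] [Finite W]
    (hA : Nat.card A = q ^ 2) (hexp : ∀ a : A, a ^ q = 1) (φ : A →* MulAut W)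
    (hW : ¬ q ∣ Nat.card W) (hfix : ∀ a : A, a ≠ 1 → fixedSub φ a = ⊥) (w : W) : w = 1 := by
  classical
  have hq : q.Prime := Fact.out
  obtain ⟨a₀, ha₀⟩ := exists_ne_one_of_card_eq_sq hA
  have hnorm : ∀ b : A, b ≠ 1 → ∏ a ∈ univ.filter (· ∈ zpowers b), φ a w = 1 := fun b hb => by
    simpa [fixedBy_zpowers, hfix b hb] using prod_mem_fixedBy φ (zpowers b) w
  have htotal : ∏ a, φ a w = 1 := by
    simpa [hfix a₀ ha₀] using fixedBy_le_fixedSub φ (mem_top a₀) (prod_mem_fixedBy φ ⊤ w)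
  have hfiber : ∀ B ∈ (univ.erase (1 : A)).image zpowers,
      ∏ a ∈ (univ.erase 1).filter (zpowers · = B), φ a w = w⁻¹ := by
    simp only [mem_image]
    rintro _ ⟨b, hb, rfl⟩
    rw [filter_zpowers_eq hexp, prod_erase_eq_div (by simp), hnorm b (mem_erase.mp hb).1,
      map_one, MulAut.one_apply, one_div]
  -- the `q + 1` subgroups of order `q` cover every `a ≠ 1` exactly once
  have hpow : w⁻¹ ^ (q + 1) = w⁻¹ := calc
    w⁻¹ ^ (q + 1) = ∏ _B ∈ (univ.erase (1 : A)).image zpowers, w⁻¹ := by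
      rw [prod_const, card_image_zpowers hA hexp]
    _ = ∏ B ∈ (univ.erase (1 : A)).image zpowers,
          ∏ a ∈ (univ.erase 1).filter (zpowers · = B), φ a w := (prod_congr rfl hfiber).symm
    _ = ∏ a ∈ univ.erase 1, φ a w := prod_fiberwise_of_maps_to (fun a ha => mem_image_of_mem _ ha) _
    _ = w⁻¹ := by rw [prod_erase_eq_div (mem_univ _), htotal, map_one, MulAut.one_apply, one_div]
  rw [pow_succ, mul_eq_right, inv_pow, inv_eq_one] at hpow
  exact orderOf_eq_one_iff.mp <| Nat.eq_one_of_dvd_coprimes (hq.coprime_iff_not_dvd.mpr hW)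
    (orderOf_dvd_of_pow_eq_one hpow) (orderOf_dvd_natCard w)

lemma iSup_fixedSub_eq_top_of_comm {W : Type*} [CommGroup W] [Finite W]
    (hA : Nat.card A = q ^ 2) (hexp : ∀ a : A, a ^ q = 1) (φ : A →* MulAut W)
    (hW : ¬ q ∣ Nat.card W) : ⨆ a ≠ 1, fixedSub φ a = ⊤ := by
  set S := ⨆ a ≠ 1, fixedSub φ a
  have hS : IsInvariant φ S := IsInvariant.iSup₂ fun a _ => isInvariant_fixedSub φ a
  have hfix : ∀ a : A, a ≠ 1 → fixedSub (quotAut φ S hS) a = ⊥ := fun a ha => by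
    rw [fixedSub_quotAut φ S hS (mt (·.trans (card_subgroup_dvd_card S)) hW)
      ((IsPGroup.of_card hA).to_subgroup _), Subgroup.map_eq_bot_iff, QuotientGroup.ker_mk']
    exact le_iSup₂ (f := fun a (_ : a ≠ 1) => fixedSub φ a) a ha
  refine (eq_top_iff' S).mpr fun w => (QuotientGroup.eq_one_iff w).mp ?_
  exact eq_one_of_forall_fixedSub_eq_bot hA hexp _ (mt (·.trans (card_quotient_dvd_card S)) hW)
    hfix _

lemma card_le_prod_card_fixedSub_of_comm {W : Type*} [CommGroup W] [Finite W]
    (hA : Nat.card A = q ^ 2) (hexp : ∀ a : A, a ^ q = 1) (φ : A →* MulAut W)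
    (hW : ¬ q ∣ Nat.card W) : Nat.card W ≤ ∏ a ∈ univ.erase 1, Nat.card (fixedSub φ a) := by
  have htop : ⨆ a ∈ univ.erase 1, fixedSub φ a = ⊤ := by
    simpa only [mem_erase, mem_univ, and_true] using iSup_fixedSub_eq_top_of_comm hA hexp φ hW
  rw [← card_top (G := W), ← htop]
  exact card_biSup_le_prod _ _

end ElementaryAbelian

section PGroup

open Finset
open scoped IsMulCommutative

variable {p q : ℕ} [Fact p.Prime] [Fact q.Prime] {A : Type*} [CommGroup A] [Fintype A]
  [DecidableEq A]

lemma card_quotient_center_lt {P : Type*} [Group P] [Finite P] [Nontrivial P]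
    (hP : IsPGroup p P) : Nat.card (P ⧸ center P) < Nat.card P := by
  have := hP.center_nontrivial
  rw [card_eq_card_quotient_mul_card_subgroup (center P)]
  exact (Nat.lt_mul_iff_one_lt_right Nat.card_pos).mpr Finite.one_lt_card

theorem iSup_fixedSub_eq_top {P : Type*} [Group P] [Finite P] (hA : Nat.card A = q ^ 2)
    (hexp : ∀ a : A, a ^ q = 1) (hP : IsPGroup p P) (φ : A →* MulAut P)
    (hqP : ¬ q ∣ Nat.card P) : ⨆ a ≠ 1, fixedSub φ a = ⊤ := by
  induction h : Nat.card P using Nat.strong_induction_on generalizing P with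
  | _ n ih =>
  rcases subsingleton_or_nontrivial P with _ | _
  · exact Subsingleton.elim _ _
  have hZ : IsInvariant φ (center P) := isInvariant_of_characteristic φ _
  have hqZ : ¬ q ∣ Nat.card (center P) := mt (·.trans (card_subgroup_dvd_card _)) hqP
  have hquot : ⨆ a ≠ 1, fixedSub (quotAut φ _ hZ) a = ⊤ :=
    ih _ (h ▸ card_quotient_center_lt hP) (hP.to_quotient _) _
      (mt (·.trans (card_quotient_dvd_card _)) hqP) rfl
  have hcenter : ⨆ a ≠ 1, fixedSub (restrictAut φ _ hZ) a = ⊤ :=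
    iSup_fixedSub_eq_top_of_comm hA hexp _ hqZ
  set S := ⨆ a ≠ 1, fixedSub φ a
  have hZS : center P ≤ S := by
    have := congrArg (map (center P).subtype) hcenter
    simp_rw [Subgroup.map_iSup, map_subtype_fixedSub_restrictAut, ← MonoidHom.range_eq_map,
      range_subtype] at this
    exact this ▸ iSup₂_mono fun a _ => inf_le_left
  have hmap : S.map (QuotientGroup.mk' (center P)) = ⊤ := by
    simp_rw [S, Subgroup.map_iSup]
    rw [← hquot]
    exact biSup_congr fun a _ => (fixedSub_quotAut φ _ hZ hqZ
      ((IsPGroup.of_card hA).to_subgroup _)).symm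
  rw [← sup_eq_left.mpr hZS, ← QuotientGroup.ker_mk' (center P), ← comap_map_eq, hmap, comap_top]

theorem card_le_prod_card_fixedSub {P : Type*} [Group P] [Finite P] (hA : Nat.card A = q ^ 2)
    (hexp : ∀ a : A, a ^ q = 1) (hP : IsPGroup p P) (φ : A →* MulAut P)
    (hqP : ¬ q ∣ Nat.card P) : Nat.card P ≤ ∏ a ∈ univ.erase 1, Nat.card (fixedSub φ a) := by
  induction h : Nat.card P using Nat.strong_induction_on generalizing P with
  | _ n ih =>
  rcases subsingleton_or_nontrivial P with _ | _
  · exact h ▸ Finite.card_le_one_iff_subsingleton.mpr ‹_› |>.trans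
      (one_le_prod' fun _ _ => Nat.card_pos)
  have hZ : IsInvariant φ (center P) := isInvariant_of_characteristic φ _
  have hqZ : ¬ q ∣ Nat.card (center P) := mt (·.trans (card_subgroup_dvd_card _)) hqP
  calc n = Nat.card (P ⧸ center P) * Nat.card (center P) :=
        h ▸ card_eq_card_quotient_mul_card_subgroup _
    _ ≤ (∏ a ∈ univ.erase 1, Nat.card (fixedSub (quotAut φ _ hZ) a)) *
          ∏ a ∈ univ.erase 1, Nat.card (fixedSub (restrictAut φ _ hZ) a) :=
        Nat.mul_le_mul (ih _ (h ▸ card_quotient_center_lt hP) (hP.to_quotient _) _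
          (mt (·.trans (card_quotient_dvd_card _)) hqP) rfl)
          (card_le_prod_card_fixedSub_of_comm hA hexp _ hqZ)
    _ = ∏ a ∈ univ.erase 1, Nat.card (fixedSub φ a) := by
        rw [← prod_mul_distrib]
        exact prod_congr rfl fun a _ =>
          (card_fixedSub_eq_mul φ _ hZ hqZ ((IsPGroup.of_card hA).to_subgroup _)).symm

end PGroup

section Bound

open Finset

variable {q : ℕ} [Fact q.Prime]

lemma fixedSub_eq_fixedBy_top {A G : Type*} [Group A] [Group G] [Finite G] (hA : IsPGroup q A)
    (φ : A →* MulAut G) {a : A} (ha : Nat.card (fixedSub φ a) < q) :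
    fixedSub φ a = fixedBy φ ⊤ := by
  have hle : fixedBy φ ⊤ ≤ fixedSub φ a := fixedBy_le_fixedSub φ (mem_top a)
  have hmod : Nat.card (fixedSub φ a) ≡ Nat.card (fixedBy φ ⊤) [MOD q] := by
    rw [← fixedBy_zpowers]
    exact (card_modEq_card_fixedBy φ (hA.to_subgroup _)).symm.trans
      (card_modEq_card_fixedBy φ (hA.to_subgroup ⊤))
  exact (eq_of_le_of_card_ge hle (hmod.eq_of_lt_of_lt ha ((card_le_of_le hle).trans_lt ha)).le).symm

variable {A : Type*} [CommGroup A] [Fintype A] [DecidableEq A]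

theorem card_le_pow_of_isPGroup {p m : ℕ} [Fact p.Prime] {P : Type*} [Group P] [Finite P]
    (hm : 0 < m) (hA : Nat.card A = q ^ 2) (hexp : ∀ a : A, a ^ q = 1) (hP : IsPGroup p P)
    (φ : A →* MulAut P) (hqP : ¬ q ∣ Nat.card P)
    (hbound : ∀ a : A, a ≠ 1 → Nat.card (fixedSub φ a) ≤ m) : Nat.card P ≤ m ^ m ^ 2 := by
  rcases le_or_gt q m with hqm | hmq
  · have hcard : #(univ.erase (1 : A)) ≤ m ^ 2 := by
      rw [card_erase_of_mem (mem_univ _), card_univ, ← Nat.card_eq_fintype_card, hA]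
      exact Nat.sub_le_of_le_add (Nat.le_add_right_of_le (Nat.pow_le_pow_left hqm 2))
    calc Nat.card P ≤ ∏ a ∈ univ.erase 1, Nat.card (fixedSub φ a) :=
          card_le_prod_card_fixedSub hA hexp hP φ hqP
      _ ≤ m ^ #(univ.erase (1 : A)) :=
          prod_le_pow_card _ _ _ fun a ha => hbound a (mem_erase.mp ha).1
      _ ≤ m ^ m ^ 2 := Nat.pow_le_pow_right hm hcard
  · obtain ⟨a₀, ha₀⟩ := exists_ne_one_of_card_eq_sq hA
    have hfix : ∀ a : A, a ≠ 1 → fixedSub φ a = fixedBy φ ⊤ := fun a ha =>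
      fixedSub_eq_fixedBy_top (IsPGroup.of_card hA) φ ((hbound a ha).trans_lt hmq)
    have htop : fixedBy φ ⊤ = ⊤ := top_unique <|
      (iSup_fixedSub_eq_top hA hexp hP φ hqP).ge.trans (iSup₂_le fun a ha => (hfix a ha).le)
    calc Nat.card P = Nat.card (fixedSub φ a₀) := by rw [hfix a₀ ha₀, htop, card_top]
      _ ≤ m := hbound a₀ ha₀
      _ ≤ m ^ m ^ 2 := Nat.le_self_pow (by positivity) m

end Bound

open scoped Pointwise in
lemma exists_isInvariant_sylow {q : ℕ} [Fact q.Prime] {A G : Type*} [Group A] [Group G] [Finite G]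
    (hA : IsPGroup q A) (φ : A →* MulAut G) (hqG : ¬ q ∣ Nat.card G) (p : ℕ) [Fact p.Prime] :
    ∃ P : Sylow p G, IsInvariant φ P := by
  let : MulDistribMulAction A G := MulDistribMulAction.compHom G φ
  have hq : ¬ q ∣ Nat.card (Sylow p G) := fun h => hqG <| h.trans <|
    (Sylow.card_dvd_index default).trans (index_dvd_card _)
  obtain ⟨P, hP⟩ := hA.nonempty_fixed_point_of_prime_not_dvd_card (Sylow p G) hq
  refine ⟨P, fun x k hk => ?_⟩
  have : x • k ∈ x • (P : Subgroup G) := smul_mem_pointwise_smul k x _ hk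
  rwa [← Sylow.pointwise_smul_def, hP x] at this

lemma le_pow_self_of_forall_prime_pow_le {n K : ℕ} (hn : n ≠ 0) (hK : 0 < K)
    (h : ∀ p : ℕ, p.Prime → p ^ n.factorization p ≤ K) : n ≤ K ^ K := by
  have hle : ∀ p ∈ n.primeFactors, p ^ n.factorization p ≤ K :=
    fun p hp => h p (Nat.prime_of_mem_primeFactors hp)
  have hsub : n.primeFactors ⊆ Finset.Icc 1 K := fun p hp => Finset.mem_Icc.mpr
    ⟨(Nat.prime_of_mem_primeFactors hp).one_le, (Nat.le_self_pow
      (Finsupp.mem_support_iff.mp (by rwa [Nat.support_factorization])) p).trans (hle p hp)⟩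
  calc n = ∏ p ∈ n.primeFactors, p ^ n.factorization p :=
        (Nat.prod_factorization_pow_eq_self hn).symm
    _ ≤ K ^ n.primeFactors.card := Finset.prod_le_pow_card _ _ _ hle
    _ ≤ K ^ K := Nat.pow_le_pow_right hK ((Finset.card_le_card hsub).trans (by simp))

end CoprimeAction

open CoprimeAction in
theorem card_bounded_independent_of_q :
    ∃ f : ℕ → ℕ, ∀ (m q : ℕ), 0 < m → q.Prime →
      ∀ (A G : Type) [CommGroup A] [Finite A] [Group G] [Finite G],
        Nat.card A = q ^ 2 → (∀ a : A, a ^ q = 1) →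
        ∀ φ : A →* MulAut G, Nat.Coprime (Nat.card A) (Nat.card G) →
          (∀ a : A, a ≠ 1 → Nat.card (fixedSub φ a) ≤ m) → Nat.card G ≤ f m := by
  refine ⟨fun m => (m ^ m ^ 2) ^ m ^ m ^ 2, fun m q hm hq A G _ _ _ _ hA hexp φ hcop hbound => ?_⟩
  have := Fact.mk hq
  have := Fintype.ofFinite A
  classical
  have hqG : ¬ q ∣ Nat.card G := hq.coprime_iff_not_dvd.mp <|
    Nat.Coprime.coprime_dvd_left (hA ▸ dvd_pow_self q two_ne_zero) hcop
  refine le_pow_self_of_forall_prime_pow_le Nat.card_pos.ne' (by positivity) fun p hp => ?_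
  have := Fact.mk hp
  obtain ⟨P, hP⟩ := exists_isInvariant_sylow (IsPGroup.of_card hA) φ hqG p
  rw [← P.card_eq_multiplicity]
  exact card_le_pow_of_isPGroup hm hA hexp P.isPGroup' (restrictAut φ P hP)
    (mt (·.trans (Subgroup.card_subgroup_dvd_card _)) hqG)
    fun a ha => (card_fixedSub_restrictAut_le φ P hP a).trans (hbound a ha)
end

section
/- Let p be a prime, P a finite p-group, and A a finite p'-group of automorphisms of P. If a ∈ A acts trivially on P/Φ(P), where Φ(P) is the Frattini subgroup, then a = 1. -/
/-! If `a ≠ 1`, some power `b` of `a` has prime order `q ≠ p`. Since `b` acts trivially on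
`P/Φ(P)`, the group `⟨b⟩` permutes every coset `xΦ(P)`, a set of `p`-power size, and so fixes a
point in each of them. Thus the fixed points of `b` form a subgroup supplementing `Φ(P)`; as
`Φ(P)` is non-generating, `b` fixes all of `P`. -/

open Subgroup Pointwise

theorem IsPGroup.not_dvd_card_of_ne {p q : ℕ} [Fact p.Prime] (hq : q.Prime) (hqp : q ≠ p)
    {G : Type*} [Group G] [Finite G] (hG : IsPGroup p G) : ¬ q ∣ Nat.card G := by
  obtain ⟨k, hk⟩ := hG.exists_card_eq
  rw [hk]
  exact fun h ↦ hqp ((Nat.prime_dvd_prime_iff_eq hq Fact.out).mp (hq.dvd_of_dvd_pow h))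

namespace MulAut

variable {P : Type*} [Group P]

def trivialModulo (N : Subgroup P) : Subgroup (MulAut P) where
  carrier := {σ | ∀ x, x⁻¹ * σ x ∈ N}
  one_mem' x := by simp
  mul_mem' {σ τ} hσ hτ x := by
    have h : x⁻¹ * (σ * τ) x = (x⁻¹ * τ x) * ((τ x)⁻¹ * σ (τ x)) := by simp [mul_assoc]
    rw [h]
    exact mul_mem (hτ x) (hσ (τ x))
  inv_mem' {σ} hσ x := by
    have h : x⁻¹ * σ⁻¹ x = ((σ⁻¹ x)⁻¹ * σ (σ⁻¹ x))⁻¹ := by simp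
    rw [h]
    exact inv_mem (hσ _)

theorem mem_trivialModulo {N : Subgroup P} {σ : MulAut P} :
    σ ∈ trivialModulo N ↔ ∀ x, x⁻¹ * σ x ∈ N := Iff.rfl

theorem apply_mem_leftCoset {N : Subgroup P} [N.Characteristic] {σ : MulAut P}
    (hσ : σ ∈ trivialModulo N) {x y : P} (hy : y ∈ x • (N : Set P)) :
    σ y ∈ x • (N : Set P) := by
  rw [mem_leftCoset_iff] at hy ⊢
  have h : x⁻¹ * σ y = (x⁻¹ * σ x) * σ (x⁻¹ * y) := by simp [mul_assoc]
  rw [h]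
  exact mul_mem (hσ x) (characteristic_iff_le_comap.mp ‹_› σ hy)


variable {N : Subgroup P} [N.Characteristic] {Q : Subgroup (MulAut P)}

def leftCosetSubMulAction (hQ : Q ≤ trivialModulo N) (x : P) : SubMulAction Q P where
  carrier := x • (N : Set P)
  smul_mem' σ _ hy := apply_mem_leftCoset (hQ σ.2) hy

theorem exists_mem_leftCoset_mem_fixedPoints [Finite P] {p q : ℕ} [Fact p.Prime] [Fact q.Prime]
    (hqp : q ≠ p) (hN : IsPGroup p N) (hQ : IsPGroup q Q) (hQN : Q ≤ trivialModulo N) (x : P) :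
    ∃ y ∈ x • (N : Set P), y ∈ FixedPoints.subgroup Q P := by
  have hcard : ¬ q ∣ Nat.card (leftCosetSubMulAction hQN x) := by
    change ¬ q ∣ Nat.card ↥(x • (N : Set P))
    rw [Set.natCard_smul_set]
    exact hN.not_dvd_card_of_ne Fact.out hqp
  obtain ⟨⟨y, hyx⟩, hy⟩ := hQ.nonempty_fixed_point_of_prime_not_dvd_card _ hcard
  exact ⟨y, hyx, fun σ ↦ congrArg Subtype.val (hy σ)⟩

theorem fixedPoints_subgroup_sup_eq_top [Finite P] {p q : ℕ} [Fact p.Prime] [Fact q.Prime]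
    (hqp : q ≠ p) (hN : IsPGroup p N) (hQ : IsPGroup q Q) (hQN : Q ≤ trivialModulo N) :
    FixedPoints.subgroup Q P ⊔ N = ⊤ := by
  refine (eq_top_iff' _).mpr fun x ↦ ?_
  obtain ⟨y, hyx, hy⟩ := exists_mem_leftCoset_mem_fixedPoints hqp hN hQ hQN x
  have hx : x = y * (x⁻¹ * y)⁻¹ := by group
  rw [hx]
  exact mul_mem (mem_sup_left hy) (mem_sup_right (inv_mem ((mem_leftCoset_iff x).mp hyx)))

end MulAut

open MulAut

theorem IsPGroup.eq_bot_of_le_trivialModulo_frattini {P : Type*} [Group P] [Finite P]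
    {p q : ℕ} [Fact p.Prime] [Fact q.Prime] (hqp : q ≠ p) (hP : IsPGroup p P)
    {Q : Subgroup (MulAut P)} (hQ : IsPGroup q Q) (hQΦ : Q ≤ trivialModulo (frattini P)) :
    Q = ⊥ := by
  have hfix : FixedPoints.subgroup Q P = ⊤ := frattini_nongenerating
    (fixedPoints_subgroup_sup_eq_top hqp (hP.to_subgroup _) hQ hQΦ)
  refine (eq_bot_iff_forall Q).mpr fun σ hσ ↦ MulEquiv.ext fun x ↦ ?_
  exact (FixedPoints.mem_subgroup _ _ x).mp (hfix ▸ mem_top x) ⟨σ, hσ⟩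

theorem eq_one_of_trivial_on_frattini_quotient {p : ℕ} (hp : p.Prime)
    {P : Type*} [Group P] [Finite P] (hP : IsPGroup p P)
    (a : MulAut P) (hcop : ¬ p ∣ orderOf a)
    (htriv : ∀ x : P, x⁻¹ * a x ∈ frattini P) : a = 1 := by
  by_contra ha
  obtain ⟨q, hq, hqa⟩ := Nat.exists_prime_and_dvd (orderOf_eq_one_iff.not.mpr ha)
  have : Fact p.Prime := ⟨hp⟩
  have : Fact q.Prime := ⟨hq⟩
  set b := a ^ (orderOf a / q)
  have hb : orderOf b = q :=
    orderOf_pow_orderOf_div (isOfFinOrder_of_finite a).orderOf_pos.ne' hqa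
  have hbq : IsPGroup q (zpowers b) :=
    IsPGroup.of_card (n := 1) (by rw [Nat.card_zpowers, hb, pow_one])
  have hbΦ : zpowers b ≤ trivialModulo (frattini P) :=
    zpowers_le.mpr (pow_mem (mem_trivialModulo.mpr htriv) _)
  have hqp : q ≠ p := by rintro rfl; exact hcop hqa
  have hb1 : b = 1 := zpowers_eq_bot.mp (hP.eq_bot_of_le_trivialModulo_frattini hqp hbq hbΦ)
  exact hq.one_lt.ne' (by rw [← hb, hb1, orderOf_one])
end

section
/- Every minimal non-nilpotent finite group is soluble; consequently, every finite non-nilpotent group contains a soluble non-nilpotent subgroup. -/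
/-!
A finite group all of whose proper subgroups are nilpotent is soluble, by induction on its order:
a nilpotent nontrivial proper normal subgroup `N` and the quotient `G ⧸ N` (which inherits the
hypothesis) are soluble. So the heart of the matter is a simple group `G` whose maximal subgroups
are nilpotent; it must be cyclic. Otherwise every element lies in a maximal subgroup, and distinct
maximal subgroups intersect trivially: take a nontrivial intersection `D = M₁ ⊓ M₂` maximal among
such, and `M₃` maximal containing the (proper) normalizer of `D`. Since normalizers grow in
nilpotent groups, every maximal `M > D` other than `M₃` meets `M₃` in more than `D`, so
`M₁ = M₃ = M₂`. Maximal subgroups are also self-normalizing, so the `|G : M|` conjugates of a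
maximal subgroup `M` contain exactly `|G| - |G : M| ≥ |G| / 2` nonidentity elements. One conjugacy
class of maximal subgroups thus does not cover `G`, and two classes together would contain more
than `|G| - 1` nonidentity elements.

A non-nilpotent finite group then has a minimal non-nilpotent subgroup, which is soluble.
-/

open Subgroup MulAction Pointwise Finset

namespace Subgroup

variable {G : Type*} [Group G]

theorem lt_inf_normalizer_of_lt {D M : Subgroup G} [Group.IsNilpotent M] (h : D < M) :
    D < M ⊓ normalizer (D : Set G) := by
  have hD : D.subgroupOf M < ⊤ := by
    rw [lt_top_iff_ne_top, Ne, subgroupOf_eq_top]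
    exact h.not_ge
  have hmap : (D.subgroupOf M).map M.subtype = D := by
    rw [subgroupOf_map_subtype, inf_of_le_left h.le]
  have hlt := map_subtype_lt_map_subtype.2 (Group.normalizerCondition_of_isNilpotent _ hD)
  rw [hmap] at hlt
  refine hlt.trans_le (le_inf (map_subtype_le _) ?_)
  simpa only [hmap] using le_normalizer_map (H := D.subgroupOf M) M.subtype

theorem _root_.IsCoatom.conjAct_smul {M : Subgroup G} (hM : IsCoatom M) (g : ConjAct G) :
    IsCoatom (g • M) :=
  ((MulDistribMulAction.toMulEquiv G g).mapSubgroup.isCoatom_iff M).2 hM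

theorem card_conjAct_smul (g : ConjAct G) (H : Subgroup G) :
    Nat.card (g • H : Subgroup G) = Nat.card H :=
  (Nat.card_congr (equivSMul g H).toEquiv).symm

theorem stabilizer_conjAct (H : Subgroup G) :
    stabilizer (ConjAct G) H =
      (normalizer (H : Set G)).comap (ConjAct.ofConjAct : ConjAct G ≃* G).toMonoidHom := by
  ext g
  exact conjAct_pointwise_smul_iff

theorem ncard_orbit_conjAct (H : Subgroup G) :
    (orbit (ConjAct G) H).ncard = (normalizer (H : Set G)).index := by
  rw [← index_stabilizer, stabilizer_conjAct,
    index_comap_of_surjective _ ConjAct.ofConjAct.surjective]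

theorem exists_isCoatom_mem_of_not_isCyclic [Finite G] (hcyc : ¬IsCyclic G) (x : G) :
    ∃ M : Subgroup G, IsCoatom M ∧ x ∈ M := by
  rw [isCyclic_iff_exists_zpowers_eq_top, not_exists] at hcyc
  obtain ⟨M, hM, hle⟩ := (eq_top_or_exists_le_coatom (zpowers x)).resolve_left (hcyc x)
  exact ⟨M, hM, hle (mem_zpowers x)⟩

theorem _root_.IsCoatom.ne_bot_of_not_isCyclic (hcyc : ¬IsCyclic G) {M : Subgroup G}
    (hM : IsCoatom M) : M ≠ ⊥ := by
  rintro rfl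
  obtain ⟨x, hx⟩ := not_forall.mp (mt (eq_top_iff' ⊥).2 hM.1)
  exact hcyc ⟨x, fun y => mem_zpowers_iff.mp <|
    hM.2 _ (bot_lt_iff_ne_bot.2 (zpowers_ne_bot.2 (mt mem_bot.2 hx))) ▸ mem_top y⟩

section Simple

variable [IsSimpleGroup G]

theorem normalizer_ne_top {H : Subgroup G} (hbot : H ≠ ⊥) (htop : H ≠ ⊤) :
    normalizer (H : Set G) ≠ ⊤ := fun h =>
  (IsSimpleGroup.eq_bot_or_eq_top_of_normal H (normalizer_eq_top_iff.mp h)).elim hbot htop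

theorem normalizer_eq_self_of_isCoatom {M : Subgroup G} (hM : IsCoatom M) (hbot : M ≠ ⊥) :
    normalizer (M : Set G) = M :=
  (le_normalizer.eq_or_lt.resolve_right fun hlt => normalizer_ne_top hbot hM.1 (hM.2 _ hlt)).symm

theorem inf_eq_bot_of_isCoatom [Finite G]
    (hnil : ∀ M : Subgroup G, IsCoatom M → Group.IsNilpotent M) {M₁ M₂ : Subgroup G}
    (h₁ : IsCoatom M₁) (h₂ : IsCoatom M₂) (hne : M₁ ≠ M₂) : M₁ ⊓ M₂ = ⊥ := by
  suffices ∀ D : Subgroup G, ∀ M₁ M₂ : Subgroup G, IsCoatom M₁ → IsCoatom M₂ → M₁ ≠ M₂ →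
      M₁ ⊓ M₂ = D → D = ⊥ from this _ M₁ M₂ h₁ h₂ hne rfl
  intro D
  induction D using WellFoundedGT.induction with | _ D ih
  rintro M₁ M₂ h₁ h₂ hne rfl
  by_contra hbot
  have hlt₁ : M₁ ⊓ M₂ < M₁ := inf_lt_left.2 fun hle => (h₁.le_iff.mp hle).elim h₂.1 (hne ·.symm)
  have hlt₂ : M₁ ⊓ M₂ < M₂ := inf_lt_right.2 fun hle => (h₂.le_iff.mp hle).elim h₁.1 hne
  obtain ⟨M₃, h₃, hle₃⟩ := (eq_top_or_exists_le_coatom (normalizer (M₁ ⊓ M₂ : Set G)))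
    |>.resolve_left (normalizer_ne_top hbot hlt₁.ne_top)
  have hunique : ∀ M, IsCoatom M → M₁ ⊓ M₂ < M → M = M₃ := by
    intro M hM hlt
    by_contra hne
    have := hnil M hM
    have hgt : M₁ ⊓ M₂ < M ⊓ M₃ := (lt_inf_normalizer_of_lt hlt).trans_le (inf_le_inf_left M hle₃)
    exact hbot (le_bot_iff.mp (ih _ hgt M M₃ hM h₃ hne rfl ▸ hgt.le))
  exact hne ((hunique M₁ h₁ hlt₁).trans (hunique M₂ h₂ hlt₂).symm)

end Simple

theorem card_erase_one_filter_mem [Fintype G] [DecidableEq G] (K : Subgroup G)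
    [DecidablePred (· ∈ K)] : #((univ.filter (· ∈ K)).erase 1) = Nat.card K - 1 := by
  rw [card_erase_of_mem (by simp), Nat.card_eq_fintype_card, Fintype.card_subtype]

section Counting

variable [Finite G]

theorem sum_card_sub_one_le_of_pairwise_inf_eq_bot {s : Finset (Subgroup G)}
    (hs : (s : Set (Subgroup G)).Pairwise fun K L => K ⊓ L = ⊥) :
    ∑ K ∈ s, (Nat.card K - 1) ≤ Nat.card G - 1 := by
  classical
  have := Fintype.ofFinite G
  have hdisj : (s : Set (Subgroup G)).PairwiseDisjoint
      fun K => (univ.filter (· ∈ K)).erase 1 := by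
    intro K hK L hL hne
    rw [Function.onFun, disjoint_left]
    intro x hxK hxL
    simp only [mem_erase, mem_filter, mem_univ, true_and] at hxK hxL
    exact hxK.1 (by simpa [hs hK hL hne] using mem_inf.2 ⟨hxK.2, hxL.2⟩)
  calc ∑ K ∈ s, (Nat.card K - 1) = #(s.biUnion fun K => (univ.filter (· ∈ K)).erase 1) := by
        rw [card_biUnion hdisj]
        exact sum_congr rfl fun K _ => (card_erase_one_filter_mem K).symm
    _ ≤ #((univ : Finset G).erase 1) := card_le_card fun x hx => by
        simp only [mem_biUnion, mem_erase] at hx ⊢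
        obtain ⟨K, -, hx1, -⟩ := hx
        exact ⟨hx1, mem_univ x⟩
    _ = Nat.card G - 1 := by
        rw [card_erase_of_mem (mem_univ 1), card_univ, Nat.card_eq_fintype_card]

theorem card_sub_one_le_sum_card_sub_one {s : Finset (Subgroup G)}
    (hs : ∀ x : G, ∃ K ∈ s, x ∈ K) : Nat.card G - 1 ≤ ∑ K ∈ s, (Nat.card K - 1) := by
  classical
  have := Fintype.ofFinite G
  calc Nat.card G - 1 = #((univ : Finset G).erase 1) := by
        rw [card_erase_of_mem (mem_univ 1), card_univ, Nat.card_eq_fintype_card]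
    _ ≤ #(s.biUnion fun K => (univ.filter (· ∈ K)).erase 1) := card_le_card fun x hx => by
        obtain ⟨K, hK, hxK⟩ := hs x
        simp only [mem_biUnion, mem_erase, mem_filter, mem_univ, true_and] at hx ⊢
        exact ⟨K, hK, hx.1, hxK⟩
    _ ≤ ∑ K ∈ s, #((univ.filter (· ∈ K)).erase 1) := card_biUnion_le
    _ = ∑ K ∈ s, (Nat.card K - 1) := sum_congr rfl fun K _ => card_erase_one_filter_mem K

theorem sum_orbit_conjAct_card_sub_one (H : Subgroup G) :
    ∑ K ∈ (orbit (ConjAct G) H).toFinite.toFinset, (Nat.card K - 1) =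
      (normalizer (H : Set G)).index * (Nat.card H - 1) := by
  rw [sum_congr rfl fun K hK => ?_, sum_const, smul_eq_mul, ← Set.ncard_eq_toFinset_card,
    ncard_orbit_conjAct]
  obtain ⟨g, rfl⟩ := (Set.Finite.mem_toFinset _).1 hK
  exact congrArg (· - 1) (card_conjAct_smul g H)

theorem sum_orbit_conjAct_card_sub_one_add_index {H : Subgroup G}
    (hH : normalizer (H : Set G) = H) :
    ∑ K ∈ (orbit (ConjAct G) H).toFinite.toFinset, (Nat.card K - 1) + H.index = Nat.card G := by
  rw [sum_orbit_conjAct_card_sub_one, hH, ← index_mul_card H, ← Nat.mul_add_one,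
    Nat.sub_add_cancel Nat.card_pos]

end Counting

end Subgroup

open Subgroup in
theorem IsSimpleGroup.isCyclic_of_forall_isCoatom_isNilpotent {G : Type*} [Group G] [Finite G]
    [IsSimpleGroup G] (hnil : ∀ M : Subgroup G, IsCoatom M → Group.IsNilpotent M) :
    IsCyclic G := by
  classical
  by_contra hcyc
  have hcover := exists_isCoatom_mem_of_not_isCyclic hcyc
  set O : Subgroup G → Finset (Subgroup G) := fun M => (orbit (ConjAct G) M).toFinite.toFinset
  have hO : ∀ M, IsCoatom M → ∀ K ∈ O M, IsCoatom K := by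
    intro M hM K hK
    obtain ⟨g, rfl⟩ := (Set.Finite.mem_toFinset _).1 hK
    exact hM.conjAct_smul g
  have hcount : ∀ M : Subgroup G, IsCoatom M →
      ∑ K ∈ O M, (Nat.card K - 1) + M.index = Nat.card G ∧
        2 ≤ M.index ∧ 2 * M.index ≤ Nat.card G := by
    intro M hM
    have hbot := hM.ne_bot_of_not_isCyclic hcyc
    have hcard : 2 ≤ Nat.card M := (one_lt_card_iff_ne_bot M).2 hbot
    refine ⟨sum_orbit_conjAct_card_sub_one_add_index (normalizer_eq_self_of_isCoatom hM hbot),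
      one_lt_index_of_ne_top hM.1, ?_⟩
    rw [← index_mul_card M, mul_comm 2]
    exact Nat.mul_le_mul_left _ hcard
  obtain ⟨M₀, h₀, -⟩ := hcover 1
  obtain ⟨hsum₀, hi₀, hn₀⟩ := hcount M₀ h₀
  by_cases hall : ∀ M, IsCoatom M → M ∈ O M₀
  · have hle := card_sub_one_le_sum_card_sub_one (s := O M₀) fun x =>
      have ⟨M, hM, hx⟩ := hcover x
      ⟨M, hall M hM, hx⟩
    omega
  push Not at hall
  obtain ⟨M₁, h₁, hM₁⟩ := hall
  obtain ⟨hsum₁, hi₁, hn₁⟩ := hcount M₁ h₁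
  have hdisj : Disjoint (O M₀) (O M₁) := disjoint_left.2 fun K hK₀ hK₁ => hM₁ <| by
    simp only [O, Set.Finite.mem_toFinset] at hK₀ hK₁ ⊢
    rw [← orbit_eq_iff.2 hK₀, orbit_eq_iff.2 hK₁]
    exact mem_orbit_self M₁
  have hle := sum_card_sub_one_le_of_pairwise_inf_eq_bot (s := O M₀ ∪ O M₁) <| by
    rintro K hK L hL hne
    simp only [coe_union, Set.mem_union, mem_coe] at hK hL
    exact inf_eq_bot_of_isCoatom hnil (hK.elim (hO M₀ h₀ K) (hO M₁ h₁ K))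
      (hL.elim (hO M₀ h₀ L) (hO M₁ h₁ L)) hne
  rw [sum_union hdisj] at hle
  omega

namespace Group

theorem isNilpotent_of_ne_top_of_surjective {G G' : Type*} [Group G] [Group G'] {f : G →* G'}
    (hf : Function.Surjective f) (hnil : ∀ H : Subgroup G, H ≠ ⊤ → IsNilpotent H)
    (K : Subgroup G') (hK : K ≠ ⊤) : IsNilpotent K :=
  have : IsNilpotent (K.comap f) := hnil _ fun h => hK <| by
    rw [← Subgroup.map_comap_eq_self_of_surjective hf K, h, ← MonoidHom.range_eq_map,
      MonoidHom.range_eq_top_of_surjective _ hf]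
  nilpotent_of_surjective _ (f.subgroupComap_surjective_of_surjective K hf)

theorem isSolvable_of_forall_ne_top_isNilpotent {G : Type*} [hG : Group G] [Finite G]
    (hnil : ∀ H : Subgroup G, H ≠ ⊤ → IsNilpotent H) : Group.IsSolvable G := by
  induction G using Finite.induction_subsingleton_or_nontrivial generalizing hG with
  | hbase => infer_instance
  | hstep G ih =>
  by_cases hsimple : ∀ N : Subgroup G, N.Normal → N = ⊥ ∨ N = ⊤
  · have : IsSimpleGroup G := ⟨hsimple⟩
    have := IsSimpleGroup.isCyclic_of_forall_isCoatom_isNilpotent fun M hM => hnil M hM.1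
    exact isSolvable_of_comm mul_comm'
  push Not at hsimple
  obtain ⟨N, hN, hbot, htop⟩ := hsimple
  have := hnil N htop
  have hlt : Nat.card (G ⧸ N) < Nat.card G := by
    rw [card_eq_card_quotient_mul_card_subgroup N]
    exact lt_mul_of_one_lt_right Nat.card_pos ((Subgroup.one_lt_card_iff_ne_bot N).2 hbot)
  have := ih _ hlt (isNilpotent_of_ne_top_of_surjective (QuotientGroup.mk'_surjective N) hnil)
  exact (isSolvable_iff_subgroup_quotient N).2 ⟨inferInstance, this⟩

theorem exists_isSolvable_not_isNilpotent {G : Type*} [Group G] [Finite G]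
    (hG : ¬IsNilpotent G) : ∃ D : Subgroup G, Group.IsSolvable D ∧ ¬IsNilpotent D := by
  obtain ⟨D, -, hmin⟩ := exists_minimal_le_of_wellFoundedLT (fun D : Subgroup G => ¬IsNilpotent D) ⊤
    fun h => hG (nilpotent_of_mulEquiv Subgroup.topEquiv)
  refine ⟨D, isSolvable_of_forall_ne_top_isNilpotent fun K hK => ?_, hmin.prop⟩
  have hlt : K.map D.subtype < D := (Subgroup.map_subtype_lt_map_subtype.2 hK.lt_top).trans_eq
    (by rw [← MonoidHom.range_eq_map, Subgroup.range_subtype])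
  have := not_not.mp (hmin.not_prop_of_lt hlt)
  exact nilpotent_of_mulEquiv (K.equivMapOfInjective D.subtype D.subtype_injective).symm

end Group

theorem minimal_non_nilpotent_solvable :
    (∀ (G : Type) [Group G] [Finite G], ¬ Group.IsNilpotent G →
      (∀ H : Subgroup G, H ≠ ⊤ → Group.IsNilpotent H) → IsSolvable G) ∧
    (∀ (G : Type) [Group G] [Finite G], ¬ Group.IsNilpotent G →
      ∃ D : Subgroup G, IsSolvable D ∧ ¬ Group.IsNilpotent D) :=
  ⟨fun _ _ _ _ => Group.isSolvable_of_forall_ne_top_isNilpotent,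
    fun _ _ _ => Group.exists_isSolvable_not_isNilpotent⟩
end

section
/- Let G be a finite group, P a normal p-subgroup of G, and H a subgroup with G = PH and G = [G,G]. Then G = [P,H]H. -/
/-!
`⁅P, H⁆ ⊔ H` is normal, being normalized by `H` and by `P` (which conjugates `h` to `⁅x, h⁆ * h`).
The quotient of `G` by it is a quotient of `P`, hence a finite `p`-group, and perfect; a nilpotent
perfect group is trivial. Normality of `⁅P, H⁆` turns `⁅P, H⁆ ⊔ H` into the product set.
-/

open Subgroup
open scoped commutatorElement

section

variable {G : Type*} [Group G]

namespace Subgroup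

theorem normal_commutator_of_sup_eq_top {K H : Subgroup G} (hKH : K ⊔ H = ⊤) : ⁅K, H⁆.Normal :=
  normalizer_eq_top_iff.mp <| top_le_iff.mp <| hKH ▸
    sup_le (normalizer_commutator_ge_left K H) (normalizer_commutator_ge_right K H)

theorem sup_le_normalizer_commutator_sup (K H : Subgroup G) :
    K ⊔ H ≤ normalizer (⁅K, H⁆ ⊔ H : Subgroup G) := by
  refine sup_le ?_ (le_sup_right.trans le_normalizer)
  have hclosure := sup_eq_closure ⁅K, H⁆ H
  rw [hclosure, le_normalizer_closure_iff, ← hclosure]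
  rintro k hk g (hg | hg)
  · exact mem_sup_left ((normalizer_commutator_ge_left K H hk g).mp hg)
  · have hconj : k * g * k⁻¹ = ⁅k, g⁆ * g := by rw [commutatorElement_def]; group
    rw [hconj]
    exact mul_mem (mem_sup_left (commutator_mem_commutator hk hg)) (mem_sup_right hg)

theorem normal_commutator_sup_of_sup_eq_top {K H : Subgroup G} (hKH : K ⊔ H = ⊤) :
    (⁅K, H⁆ ⊔ H).Normal :=
  normalizer_eq_top_iff.mp <| top_le_iff.mp <| hKH ▸ sup_le_normalizer_commutator_sup K H

end Subgroup

theorem IsPGroup.quotient_of_sup_eq_top {p : ℕ} {P N : Subgroup G} [N.Normal] (hP : IsPGroup p P)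
    (hPN : P ⊔ N = ⊤) : IsPGroup p (G ⧸ N) := by
  refine hP.of_surjective ((QuotientGroup.mk' N).comp P.subtype) fun gN ↦ ?_
  obtain ⟨g, rfl⟩ := QuotientGroup.mk'_surjective N gN
  have hg : g ∈ (↑(P ⊔ N) : Set G) := hPN ▸ mem_top g
  rw [mul_normal] at hg
  obtain ⟨x, hx, n, hn, rfl⟩ := hg
  exact ⟨⟨x, hx⟩, by simpa using hn⟩

theorem IsPGroup.subsingleton_of_isPerfect {p : ℕ} [Fact p.Prime] [Finite G] [Group.IsPerfect G]
    (hG : IsPGroup p G) : Subsingleton G := by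
  by_contra! hG'
  exact Group.IsPerfect.not_isNilpotent G hG.isNilpotent

end

theorem perfect_eq_commutator_mul_general {p : ℕ} (hp : p.Prime) {G : Type*} [Group G] [Finite G]
    (P : Subgroup G) (hPp : IsPGroup p P) (H : Subgroup G)
    (hPH : ∀ g : G, ∃ x ∈ P, ∃ h ∈ H, g = x * h)
    (hperf : commutator G = ⊤) :
    ∀ g : G, ∃ x ∈ ⁅P, H⁆, ∃ h ∈ H, g = x * h := by
  have : Fact p.Prime := ⟨hp⟩
  have : Group.IsPerfect G := ⟨hperf⟩
  have hPH_top : P ⊔ H = ⊤ := eq_top_iff.mpr fun g _ ↦ by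
    obtain ⟨x, hx, h, hh, rfl⟩ := hPH g
    exact mul_mem_sup hx hh
  have := normal_commutator_of_sup_eq_top hPH_top
  have := normal_commutator_sup_of_sup_eq_top hPH_top
  have hquot : IsPGroup p (G ⧸ (⁅P, H⁆ ⊔ H)) :=
    hPp.quotient_of_sup_eq_top (eq_top_mono (sup_le_sup_left le_sup_right P) hPH_top)
  have htop : ⁅P, H⁆ ⊔ H = ⊤ := QuotientGroup.subsingleton_iff.mp hquot.subsingleton_of_isPerfect
  intro g
  have hg : g ∈ (↑(⁅P, H⁆ ⊔ H) : Set G) := htop ▸ mem_top g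
  rw [normal_mul] at hg
  obtain ⟨x, hx, h, hh, rfl⟩ := hg
  exact ⟨x, hx, h, hh, rfl⟩

theorem perfect_eq_commutator_mul {p : ℕ} (hp : p.Prime) {G : Type*} [Group G] [Finite G]
    (P : Subgroup G) [P.Normal] (hPp : IsPGroup p P) (H : Subgroup G)
    (hPH : ∀ g : G, ∃ x ∈ P, ∃ h ∈ H, g = x * h)
    (hperf : commutator G = ⊤) :
    ∀ g : G, ∃ x ∈ ⁅P, H⁆, ∃ h ∈ H, g = x * h :=
  perfect_eq_commutator_mul_general hp P hPp H hPH hperf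
end
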